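/- arXiv:2204.14013 — 6 statements merged into one kernel-verified Lean document; each statement's English description precedes it below -/
import Mathlib

section
/- Assume the prime-tuple hypothesis. Let d_1, …, d_k be integers, let q > 1 be an integer and let t be an integer. Then there exist infinitely many integers x with x ≡ t (mod q) such that |x + d_i| is prime for every i, if and only if for every prime p the following holds: if p ∣ q then p ∤ t + d_i for every i; and if p ∤ q then the residues of d_1, …, d_k modulo p do not cover all of ℤ/pℤ. -/
/-- The prime-tuple hypothesis: for nonzero integers `a i` and integers `b i`,
if there is no prime `p` such that for every integer `x` some form `a i * x + b i`
is divisible by `p`, then there are infinitely many integers `x` such that all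
`|a i * x + b i|` are prime. -/
def PrimeTupleHypothesis : Prop :=
  ∀ k : ℕ, 1 ≤ k → ∀ a b : Fin k → ℤ, (∀ i, a i ≠ 0) →
    (¬ ∃ p : ℕ, p.Prime ∧ ∀ x : ℤ, ∃ i, (p : ℤ) ∣ a i * x + b i) →
    {x : ℤ | ∀ i, (a i * x + b i).natAbs.Prime}.Infinite

lemma aux_mem_pair (p : ℕ) (hp : p.Prime) (x c : ℤ) (hdvd : (p : ℤ) ∣ x + c)
    (hprime : (x + c).natAbs.Prime) : x = (p : ℤ) - c ∨ x = -(p : ℤ) - c := by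
  have h1 : p ∣ (x + c).natAbs := by
    rw [← Int.natAbs_natCast p]
    exact Int.natAbs_dvd_natAbs.mpr hdvd
  have h2 : p = (x + c).natAbs := ((Nat.prime_dvd_prime_iff_eq hp hprime).mp h1)
  have h3 : x + c = (p : ℤ) ∨ x + c = -(p : ℤ) := Int.natAbs_eq_iff.mp h2.symm
  rcases h3 with h | h
  · left; omega
  · right; omega

/-- Assuming the prime-tuple hypothesis: given integers `d i`, an integer `q > 1`
and an integer `t`, there exist infinitely many `x ≡ t (mod q)` such that all
`|x + d i|` are prime if and only if for every prime `p`: if `p ∣ q` then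
`p ∤ t + d i` for every `i`, and if `p ∤ q` then the residues of the `d i`
do not cover all of `ℤ/pℤ`. -/
theorem prime_tuple_corollary (H : PrimeTupleHypothesis)
    (k : ℕ) (hk : 1 ≤ k) (d : Fin k → ℤ) (q : ℤ) (hq : 1 < q) (t : ℤ) :
    {x : ℤ | x ≡ t [ZMOD q] ∧ ∀ i, (x + d i).natAbs.Prime}.Infinite ↔
      ∀ p : ℕ, p.Prime →
        ((p : ℤ) ∣ q → ∀ i, ¬ (p : ℤ) ∣ (t + d i)) ∧
        (¬ (p : ℤ) ∣ q → ¬ ∀ z : ZMod p, ∃ i, ((d i : ℤ) : ZMod p) = z) := by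
  constructor
  · intro hS p hp
    constructor
    · intro hpq i hpi
      refine hS (Set.Finite.subset ((Set.finite_singleton (-(p:ℤ) - d i)).insert ((p:ℤ) - d i)) ?_)
      rintro x ⟨hx1, hx2⟩
      have hqd : q ∣ t - x := (Int.modEq_iff_dvd).mp hx1
      have hdvd : (p : ℤ) ∣ x + d i := by
        have h1 : (p : ℤ) ∣ t - x := dvd_trans hpq hqd
        have : x + d i = (t + d i) - (t - x) := by ring
        rw [this]; exact dvd_sub hpi h1
      rcases aux_mem_pair p hp x (d i) hdvd (hx2 i) with h | h
      · exact Or.inl h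
      · exact Or.inr h
    · intro _ hcov
      refine hS (Set.Finite.subset
        (Set.finite_iUnion (fun i : Fin k => (Set.finite_singleton (-(p:ℤ) - d i)).insert ((p:ℤ) - d i))) ?_)
      rintro x ⟨_, hx2⟩
      obtain ⟨i, hi⟩ := hcov ((-x : ℤ) : ZMod p)
      have hdvd : (p : ℤ) ∣ x + d i := by
        rw [← ZMod.intCast_zmod_eq_zero_iff_dvd]
        push_cast
        push_cast at hi
        rw [hi]; ring
      refine Set.mem_iUnion.mpr ⟨i, ?_⟩
      rcases aux_mem_pair p hp x (d i) hdvd (hx2 i) with h | h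
      · exact Or.inl h
      · exact Or.inr h
  · intro hcond
    have hq0 : q ≠ 0 := by omega
    have hT := H k hk (fun _ => q) (fun i => t + d i) (fun _ => hq0) ?hyp
    case hyp =>
      rintro ⟨p, hp, hall⟩
      haveI := Fact.mk hp
      by_cases hpq : (p : ℤ) ∣ q
      · obtain ⟨i, hi⟩ := hall 0
        exact (hcond p hp).1 hpq i (by simpa using hi)
      · obtain ⟨z, hz⟩ := not_forall.mp ((hcond p hp).2 hpq)
        push_neg at hz
        have hqz : ((q : ℤ) : ZMod p) ≠ 0 := by
          rwa [Ne, ZMod.intCast_zmod_eq_zero_iff_dvd]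
        set w : ZMod p := ((q : ℤ) : ZMod p)⁻¹ * (-z - ((t : ℤ) : ZMod p)) with hw
        obtain ⟨i, hi⟩ := hall (w.val : ℤ)
        have : ((q * (w.val : ℤ) + (t + d i) : ℤ) : ZMod p) = 0 := by
          rw [ZMod.intCast_zmod_eq_zero_iff_dvd]; exact hi
        push_cast at this
        rw [ZMod.natCast_val, ZMod.cast_id] at this
        apply hz i
        have hqw : ((q : ℤ) : ZMod p) * w = -z - ((t : ℤ) : ZMod p) := by
          rw [hw, mul_inv_cancel_left₀ hqz]
        rw [hqw] at this
        have : ((d i : ℤ) : ZMod p) = z := by linear_combination this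
        exact this
    have hinj : Set.InjOn (fun y : ℤ => q * y + t)
        {y : ℤ | ∀ i, ((fun _ => q) i * y + (fun i => t + d i) i).natAbs.Prime} := by
      intro y1 _ y2 _ h
      simp only at h
      have : q * y1 = q * y2 := by omega
      exact mul_left_cancel₀ hq0 this
    refine (hT.image hinj).mono ?_
    rintro x ⟨y, hy, rfl⟩
    constructor
    · show q * y + t ≡ t [ZMOD q]
      rw [Int.modEq_iff_dvd]
      exact ⟨-y, by ring⟩
    · intro i
      have := hy i
      simpa [add_assoc] using this
end

section
/- Let p be a prime and let W ⊆ ℤ/pℤ be a nonempty set of residues. If |W| < (p − 1)/2 − (log p)/(log(4/3)), then there exist sets U, V ⊆ ℤ/pℤ forming a prime-compatible pair modulo p with W ⊆ U and W ⊆ V. -/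
open Pointwise

/-- `U, V ⊆ ℤ/pℤ` form a prime-compatible pair modulo `p` if they are nonempty and
`(U \ V) - (V \ U)` is exactly the set of nonzero residues. -/
def PrimeCompatiblePair (p : ℕ) (U V : Set (ZMod p)) : Prop :=
  U.Nonempty ∧ V.Nonempty ∧ (U \ V) - (V \ U) = {0}ᶜ

/-!
For `z ≠ 0` the residues `(2j+1)z` and `2jz`, `j < p/2`, form `p/2` pairwise disjoint pairs with
difference `z`, and at least `M = p/2 - |W|` of these pairs avoid `W`. Colour every residue at
random and put `W` together with the `true` residues into `U`, `W` with the `false` ones into `V`.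
Then `z` is represented as soon as one of its `M` pairs is coloured `(true, false)`, which fails
with probability `(3/4)^M`. The hypothesis gives `(p - 1)(3/4)^M < 1`, so by the union
bound some colouring represents every nonzero `z`.
-/

open Finset Function

section Colorings

variable {α ι : Type*}

lemma card_filter_apply_eq_mul_two [DecidableEq α] {s : Finset (α → Bool)} {a : α}
    (hs : ∀ f ∈ s, update f a (!f a) ∈ s) (v : Bool) :
    #{f ∈ s | f a = v} * 2 = #s := by
  have hflip : ∀ f : α → Bool, update (update f a (!f a)) a (!(update f a (!f a)) a) = f := by
    intro f; simp
  have hswap : #{f ∈ s | f a = v} = #{f ∈ s | ¬f a = v} := by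
    refine card_nbij' (fun f => update f a (!f a)) (fun f => update f a (!f a)) ?_ ?_
      (fun f _ => hflip f) (fun f _ => hflip f) <;>
    · intro f hf
      simp only [coe_filter, Set.mem_ofPred_eq] at hf ⊢
      refine ⟨hs f hf.1, ?_⟩
      cases v <;> simp_all
  rw [mul_two]
  nth_rewrite 2 [hswap]
  exact card_filter_add_card_filter_not _

lemma card_filter_apply_eq_true_and_apply_eq_false_mul_four [DecidableEq α]
    {s : Finset (α → Bool)} {a b : α}
    (hab : a ≠ b) (ha : ∀ f ∈ s, update f a (!f a) ∈ s) (hb : ∀ f ∈ s, update f b (!f b) ∈ s) :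
    #{f ∈ s | f a = true ∧ f b = false} * 4 = #s := by
  have ha' : ∀ f ∈ {f ∈ s | f b = false}, update f a (!f a) ∈ {f ∈ s | f b = false} := by
    intro f hf
    rw [mem_filter] at hf ⊢
    exact ⟨ha f hf.1, by rw [update_of_ne hab.symm]; exact hf.2⟩
  rw [← card_filter_apply_eq_mul_two hb false, ← card_filter_apply_eq_mul_two ha' true,
    filter_filter]
  simp only [and_comm]
  ring

def avoidingColorings [DecidableEq α] [Fintype α] (a b : ι → α) (s : Finset ι) :
    Finset (α → Bool) :=
  {f | ∀ i ∈ s, ¬(f (a i) = true ∧ f (b i) = false)}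

lemma avoidingColorings_anti [DecidableEq α] [Fintype α] (a b : ι → α) {s t : Finset ι}
    (hst : s ⊆ t) :
    avoidingColorings a b t ⊆ avoidingColorings a b s := by
  intro f
  simp only [avoidingColorings, mem_filter, mem_univ, true_and]
  exact fun hf i hi => hf i (hst hi)

lemma update_mem_avoidingColorings [DecidableEq α] [Fintype α] {a b : ι → α} {s : Finset ι} {x : α}
    (hx : ∀ i ∈ s, a i ≠ x ∧ b i ≠ x) {f : α → Bool} (hf : f ∈ avoidingColorings a b s)
    (v : Bool) : update f x v ∈ avoidingColorings a b s := by
  simp only [avoidingColorings, mem_filter, mem_univ, true_and] at hf ⊢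
  intro i hi
  rw [update_of_ne (hx i hi).1, update_of_ne (hx i hi).2]
  exact hf i hi

lemma card_avoidingColorings_mul_four_pow [DecidableEq α] [Fintype α] {a b : ι → α}
    (hab : Injective (Sum.elim a b)) (s : Finset ι) :
    #(avoidingColorings a b s) * 4 ^ #s = 2 ^ Fintype.card α * 3 ^ #s := by
  classical
  induction s using Finset.induction_on with
  | empty => simp [avoidingColorings]
  | @insert i s hi ih =>
    have hfresh : ∀ j ∈ s, (a j ≠ a i ∧ b j ≠ a i) ∧ (a j ≠ b i ∧ b j ≠ b i) := by
      intro j hj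
      have hji : j ≠ i := ne_of_mem_of_not_mem hj hi
      simp only [ne_eq, ← Sum.elim_inl a b, ← Sum.elim_inr a b, hab.eq_iff]
      simp [hji]
    have hsplit := card_filter_add_card_filter_not (s := avoidingColorings a b s)
      (fun f => f (a i) = true ∧ f (b i) = false)
    have hquarter := card_filter_apply_eq_true_and_apply_eq_false_mul_four
      (s := avoidingColorings a b s) (a := a i) (b := b i) (hab.ne Sum.inl_ne_inr)
      (fun f hf => update_mem_avoidingColorings (fun j hj => (hfresh j hj).1) hf _)
      (fun f hf => update_mem_avoidingColorings (fun j hj => (hfresh j hj).2) hf _)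
    have hinsert : avoidingColorings a b (insert i s)
        = {f ∈ avoidingColorings a b s | ¬(f (a i) = true ∧ f (b i) = false)} := by
      ext f
      simp only [avoidingColorings, mem_filter, mem_univ, true_and, forall_mem_insert]
      tauto
    rw [hinsert, card_insert_of_notMem hi, pow_succ, pow_succ]
    linear_combination (4 * 4 ^ #s) * hsplit - 4 ^ #s * hquarter + 3 * ih

lemma card_avoidingColorings_mul_four_pow_le [DecidableEq α] [Fintype α] {a b : ι → α}
    (hab : Injective (Sum.elim a b)) {s : Finset ι} {M : ℕ} (hM : M ≤ #s) :
    #(avoidingColorings a b s) * 4 ^ M ≤ 2 ^ Fintype.card α * 3 ^ M := by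
  obtain ⟨t, hts, rfl⟩ := exists_subset_card_eq hM
  rw [← card_avoidingColorings_mul_four_pow hab t]
  gcongr
  exact avoidingColorings_anti a b hts

/-- The union bound: a uniformly random colouring misses all pairs of one `s t` with probability
at most `(3/4) ^ M`. -/
lemma exists_coloring_forall_exists_of_card_mul_three_pow_lt [Fintype α] {τ : Type*}
    (T : Finset τ) (a b : τ → ι → α) (s : τ → Finset ι) {M : ℕ}
    (hab : ∀ t ∈ T, Injective (Sum.elim (a t) (b t))) (hM : ∀ t ∈ T, M ≤ #(s t))
    (hT : #T * 3 ^ M < 4 ^ M) :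
    ∃ f : α → Bool, ∀ t ∈ T, ∃ i ∈ s t, f (a t i) = true ∧ f (b t i) = false := by
  classical
  have hbad : #(T.biUnion fun t => avoidingColorings (a t) (b t) (s t)) < 2 ^ Fintype.card α := by
    refine lt_of_mul_lt_mul_right (a := 4 ^ M) ?_ (Nat.zero_le _)
    calc #(T.biUnion fun t => avoidingColorings (a t) (b t) (s t)) * 4 ^ M
        ≤ (∑ t ∈ T, #(avoidingColorings (a t) (b t) (s t))) * 4 ^ M := by
          gcongr; exact card_biUnion_le
      _ ≤ ∑ _t ∈ T, 2 ^ Fintype.card α * 3 ^ M := by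
          rw [sum_mul]
          exact sum_le_sum fun t ht => card_avoidingColorings_mul_four_pow_le (hab t ht) (hM t ht)
      _ < 2 ^ Fintype.card α * 4 ^ M := by
          rw [sum_const, smul_eq_mul, mul_left_comm]
          gcongr
  obtain ⟨f, -, hf⟩ := exists_mem_notMem_of_card_lt_card
    (s := T.biUnion fun t => avoidingColorings (a t) (b t) (s t)) (t := univ)
    (by simpa [Fintype.card_fun] using hbad)
  refine ⟨f, fun t ht => ?_⟩
  simpa [avoidingColorings] using fun h => hf (mem_biUnion.mpr ⟨t, ht, h⟩)

lemma card_sub_card_le_card_filter_notMem [DecidableEq α] [Fintype ι] {a b : ι → α}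
    (hab : Injective (Sum.elim a b)) (W : Finset α) :
    Fintype.card ι - #W ≤ #{i | a i ∉ W ∧ b i ∉ W} := by
  classical
  have hhit : #{i | ¬(a i ∉ W ∧ b i ∉ W)} ≤ #W := by
    let g : ι → ι ⊕ ι := fun i => if a i ∈ W then .inl i else .inr i
    have hg : Injective g := by
      intro i k h
      simp only [g] at h
      split_ifs at h <;> simpa using h
    refine card_le_card_of_injOn (Sum.elim a b ∘ g) ?_ (hab.comp hg).injOn
    intro i hi
    simp only [coe_filter, mem_univ, true_and, Set.mem_ofPred_eq, not_and_or, not_not] at hi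
    simp only [mem_coe, comp_apply, g]
    split_ifs with h
    · exact h
    · exact hi.resolve_left h
  have := card_filter_add_card_filter_not (s := (univ : Finset ι)) (fun i => a i ∉ W ∧ b i ∉ W)
  rw [card_univ] at this
  omega

end Colorings

lemma injective_sumElim_natCast_mul {p P : ℕ} [Fact p.Prime] (hP : 2 * P ≤ p) {z : ZMod p}
    (hz : z ≠ 0) :
    Injective (Sum.elim (fun j : Fin P => ((2 * j + 1 : ℕ) : ZMod p) * z)
      (fun j : Fin P => ((2 * j : ℕ) : ZMod p) * z)) := by
  have hcast : ∀ i k : ℕ, i < p → k < p → (i : ZMod p) * z = k * z → i = k := by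
    intro i k hi hk h
    have := (ZMod.natCast_eq_natCast_iff' i k p).mp (mul_right_cancel₀ hz h)
    rwa [Nat.mod_eq_of_lt hi, Nat.mod_eq_of_lt hk] at this
  rintro (i | i) (k | k) h <;> have := hcast _ _ (by omega) (by omega) h <;> grind

lemma mul_three_pow_lt_four_pow {n M : ℕ} (hn : 0 < n)
    (h : Real.log n / Real.log (4 / 3) < M) : n * 3 ^ M < 4 ^ M := by
  have hlog : Real.log n < Real.log ((4 / 3) ^ M) := by
    rwa [Real.log_pow, ← div_lt_iff₀ (Real.log_pos (by norm_num))]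
  have hpow := (Real.log_lt_log_iff (by positivity) (by positivity)).mp hlog
  rw [div_pow, lt_div_iff₀ (by positivity)] at hpow
  exact_mod_cast hpow

lemma log_div_log_lt_div_two_sub {p m : ℕ}
    (h : (m : ℝ) < ((p : ℝ) - 1) / 2 - Real.log p / Real.log (4 / 3)) :
    Real.log p / Real.log (4 / 3) < (p / 2 - m : ℕ) := by
  have hlog : 0 ≤ Real.log p / Real.log (4 / 3) :=
    div_nonneg (Real.log_natCast_nonneg p) (Real.log_nonneg (by norm_num))
  have hp : ((p : ℝ) - 1) / 2 ≤ (p / 2 : ℕ) := by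
    have : (p : ℝ) ≤ 2 * (p / 2 : ℕ) + 1 := by exact_mod_cast (show p ≤ 2 * (p / 2) + 1 by omega)
    linarith
  have hm : m ≤ p / 2 := by exact_mod_cast (show (m : ℝ) ≤ (p / 2 : ℕ) by linarith)
  rw [Nat.cast_sub hm]
  linarith

lemma primeCompatiblePair_union_of_coloring {p : ℕ} [Nontrivial (ZMod p)] (W : Set (ZMod p))
    (f : ZMod p → Bool) (hf : ∀ z ≠ 0, ∃ x ∉ W, ∃ y ∉ W, f x = true ∧ f y = false ∧ x - y = z) :
    PrimeCompatiblePair p (W ∪ {x | f x = true}) (W ∪ {x | f x = false}) := by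
  have hUV : (W ∪ {x | f x = true}) \ (W ∪ {x | f x = false}) = {x | x ∉ W ∧ f x = true} := by
    ext x; cases f x <;> simp <;> tauto
  have hVU : (W ∪ {x | f x = false}) \ (W ∪ {x | f x = true}) = {x | x ∉ W ∧ f x = false} := by
    ext x; cases f x <;> simp <;> tauto
  obtain ⟨x, hxW, y, hyW, hx, hy, -⟩ := hf 1 one_ne_zero
  refine ⟨⟨x, Or.inr hx⟩, ⟨y, Or.inr hy⟩, ?_⟩
  rw [hUV, hVU]
  ext z
  constructor
  · rintro ⟨x, ⟨-, hx⟩, y, ⟨-, hy⟩, rfl⟩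
    simp only [Set.mem_compl_iff, Set.mem_singleton_iff, sub_eq_zero]
    rintro rfl
    simp_all
  · intro hz
    obtain ⟨x, hxW, y, hyW, hx, hy, rfl⟩ := hf z hz
    exact ⟨x, ⟨hxW, hx⟩, y, ⟨hyW, hy⟩, rfl⟩

theorem exists_prime_compatible_pair_containing_general
    (p : ℕ) (hp : p.Prime) (W : Set (ZMod p))
    (h : (W.ncard : ℝ) < ((p : ℝ) - 1) / 2 - Real.log p / Real.log (4 / 3)) :
    ∃ U V : Set (ZMod p), PrimeCompatiblePair p U V ∧ W ⊆ U ∧ W ⊆ V := by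
  classical
  have := Fact.mk hp
  set P := p / 2
  set M := P - W.ncard
  have hM := log_div_log_lt_div_two_sub h
  let a : ZMod p → Fin P → ZMod p := fun z j => ((2 * j + 1 : ℕ) : ZMod p) * z
  let b : ZMod p → Fin P → ZMod p := fun z j => ((2 * j : ℕ) : ZMod p) * z
  have hab (z : ZMod p) (hz : z ∈ univ.erase 0) : Injective (Sum.elim (a z) (b z)) :=
    injective_sumElim_natCast_mul (by omega) (ne_of_mem_erase hz)
  obtain ⟨f, hf⟩ := exists_coloring_forall_exists_of_card_mul_three_pow_lt (univ.erase 0) a b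
    (fun z => {j | a z j ∉ W.toFinset ∧ b z j ∉ W.toFinset}) hab
    (fun z hz => by
      simpa [M, Set.ncard_eq_toFinset_card'] using
        card_sub_card_le_card_filter_notMem (hab z hz) W.toFinset)
    (calc #((univ : Finset (ZMod p)).erase 0) * 3 ^ M ≤ p * 3 ^ M := by gcongr; simp
      _ < 4 ^ M := mul_three_pow_lt_four_pow hp.pos hM)
  refine ⟨_, _, primeCompatiblePair_union_of_coloring W f fun z hz => ?_, Set.subset_union_left,
    Set.subset_union_left⟩
  obtain ⟨j, hj, hfa, hfb⟩ := hf z (mem_erase.mpr ⟨hz, mem_univ _⟩)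
  simp only [Set.mem_toFinset, mem_filter, mem_univ, true_and] at hj
  exact ⟨_, hj.1, _, hj.2, hfa, hfb, by simp only [a, b]; push_cast; ring⟩

/-- If `W ⊆ ℤ/pℤ` is nonempty and `|W| < (p-1)/2 - log p / log (4/3)`, then there
is a prime-compatible pair `U, V` modulo `p` with `W ⊆ U` and `W ⊆ V`. -/
theorem exists_prime_compatible_pair_containing
    (p : ℕ) (hp : p.Prime) (W : Set (ZMod p)) (hW : W.Nonempty)
    (h : (W.ncard : ℝ) < ((p : ℝ) - 1) / 2 - Real.log p / Real.log (4 / 3)) :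
    ∃ U V : Set (ZMod p), PrimeCompatiblePair p U V ∧ W ⊆ U ∧ W ⊆ V :=
  exists_prime_compatible_pair_containing_general p hp W h
end

section
/- Let p be a prime with p ≥ 7. Then there exist sets U, V ⊆ ℤ/pℤ forming a prime-compatible pair modulo p such that the residues of 1 and 11 lie in U \ V, the residue of 6 lies in V \ U, and |U ∩ V| = 2. -/
private lemma zmod_cast_ne (p c d : ℕ) (hdc : d < c) (hcp : c - d < p) :
    (c : ZMod p) ≠ (d : ZMod p) := by
  haveI : NeZero p := ⟨by omega⟩
  intro h
  have h2 : ((c - d : ℕ) : ZMod p) = 0 := by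
    rw [Nat.cast_sub hdc.le, h, sub_self]
  have := Nat.le_of_dvd (by omega) ((ZMod.natCast_eq_zero_iff _ _).mp h2)
  omega


open Pointwise

/-- For `p ≥ 7` prime there is a prime-compatible pair `U, V` modulo `p` with
`1, 11 ∈ U \ V`, `6 ∈ V \ U` and `|U ∩ V| = 2`. -/
theorem exists_prime_compatible_pair_special
    (p : ℕ) (hp : p.Prime) (hp7 : 7 ≤ p) :
    ∃ U V : Set (ZMod p), PrimeCompatiblePair p U V ∧
      (1 : ZMod p) ∈ U \ V ∧ (11 : ZMod p) ∈ U \ V ∧ (6 : ZMod p) ∈ V \ U ∧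
      (U ∩ V).ncard = 2 := by
  unfold PrimeCompatiblePair
  rcases lt_or_ge p 11 with h11 | h11
  · -- small case: p = 7
    have hp7' : p = 7 := by
      interval_cases p
      · rfl
      · exact absurd hp (by norm_num)
      · exact absurd hp (by norm_num)
      · exact absurd hp (by norm_num)
    subst hp7'
    refine ⟨{1,2,3,4}, {0,2,3,5,6}, ⟨⟨1, by simp⟩, ⟨0, by simp⟩, ?_⟩, ?_, ?_, ?_, ?_⟩
    · ext x
      simp only [Set.mem_sub, Set.mem_diff, Set.mem_insert_iff, Set.mem_singleton_iff,
        Set.mem_compl_iff]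
      revert x
      decide
    · simp only [Set.mem_diff, Set.mem_insert_iff, Set.mem_singleton_iff]; decide
    · simp only [Set.mem_diff, Set.mem_insert_iff, Set.mem_singleton_iff]; decide
    · simp only [Set.mem_diff, Set.mem_insert_iff, Set.mem_singleton_iff]; decide
    · have h : ({1,2,3,4} : Set (ZMod 7)) ∩ {0,2,3,5,6} = {2,3} := by
        ext x
        simp only [Set.mem_inter_iff, Set.mem_insert_iff, Set.mem_singleton_iff]
        revert x
        decide
      rw [h, Set.ncard_pair (by decide)]
  · -- general case: p ≥ 11
    have key : ∀ c d : ℕ, d < c → c - d < 11 → ((c : ZMod p)) ≠ ((d : ZMod p)) :=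
      fun c d h1 h2 => zmod_cast_ne p c d h1 (by omega)
    -- all needed numeral inequalities
    have h21 : (2 : ZMod p) ≠ 1 := by exact_mod_cast key 2 1 (by norm_num) (by norm_num)
    have h51 : (5 : ZMod p) ≠ 1 := by exact_mod_cast key 5 1 (by norm_num) (by norm_num)
    have h61 : (6 : ZMod p) ≠ 1 := by exact_mod_cast key 6 1 (by norm_num) (by norm_num)
    have h91 : (9 : ZMod p) ≠ 1 := by exact_mod_cast key 9 1 (by norm_num) (by norm_num)
    have h112 : (11 : ZMod p) ≠ 2 := by exact_mod_cast key 11 2 (by norm_num) (by norm_num)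
    have h115 : (11 : ZMod p) ≠ 5 := by exact_mod_cast key 11 5 (by norm_num) (by norm_num)
    have h116 : (11 : ZMod p) ≠ 6 := by exact_mod_cast key 11 6 (by norm_num) (by norm_num)
    have h119 : (11 : ZMod p) ≠ 9 := by exact_mod_cast key 11 9 (by norm_num) (by norm_num)
    have h52 : (5 : ZMod p) ≠ 2 := by exact_mod_cast key 5 2 (by norm_num) (by norm_num)
    have h62 : (6 : ZMod p) ≠ 2 := by exact_mod_cast key 6 2 (by norm_num) (by norm_num)
    have h92 : (9 : ZMod p) ≠ 2 := by exact_mod_cast key 9 2 (by norm_num) (by norm_num)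
    have h95 : (9 : ZMod p) ≠ 5 := by exact_mod_cast key 9 5 (by norm_num) (by norm_num)
    have h96 : (9 : ZMod p) ≠ 6 := by exact_mod_cast key 9 6 (by norm_num) (by norm_num)
    have h65 : (6 : ZMod p) ≠ 5 := by exact_mod_cast key 6 5 (by norm_num) (by norm_num)
    have h32 : (3 : ZMod p) ≠ 2 := by exact_mod_cast key 3 2 (by norm_num) (by norm_num)
    have h53 : (5 : ZMod p) ≠ 3 := by exact_mod_cast key 5 3 (by norm_num) (by norm_num)
    have h63 : (6 : ZMod p) ≠ 3 := by exact_mod_cast key 6 3 (by norm_num) (by norm_num)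
    have h93 : (9 : ZMod p) ≠ 3 := by exact_mod_cast key 9 3 (by norm_num) (by norm_num)
    have h72 : (7 : ZMod p) ≠ 2 := by exact_mod_cast key 7 2 (by norm_num) (by norm_num)
    have h75 : (7 : ZMod p) ≠ 5 := by exact_mod_cast key 7 5 (by norm_num) (by norm_num)
    have h76 : (7 : ZMod p) ≠ 6 := by exact_mod_cast key 7 6 (by norm_num) (by norm_num)
    have h97 : (9 : ZMod p) ≠ 7 := by exact_mod_cast key 9 7 (by norm_num) (by norm_num)
    have h102 : (10 : ZMod p) ≠ 2 := by exact_mod_cast key 10 2 (by norm_num) (by norm_num)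
    have h105 : (10 : ZMod p) ≠ 5 := by exact_mod_cast key 10 5 (by norm_num) (by norm_num)
    have h106 : (10 : ZMod p) ≠ 6 := by exact_mod_cast key 10 6 (by norm_num) (by norm_num)
    have h109 : (10 : ZMod p) ≠ 9 := by exact_mod_cast key 10 9 (by norm_num) (by norm_num)
    refine ⟨{x | x ≠ 5 ∧ x ≠ 6}, {2,5,6,9}, ⟨⟨1, ⟨fun h => h51 h.symm, fun h => h61 h.symm⟩⟩, ⟨2, by simp⟩, ?_⟩, ?_, ?_, ?_, ?_⟩
    · ext z
      simp only [Set.mem_sub, Set.mem_diff, Set.mem_setOf_eq, Set.mem_insert_iff,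
        Set.mem_singleton_iff, Set.mem_compl_iff]
      constructor
      · rintro ⟨a, ⟨⟨ha5, ha6⟩, haV⟩, b, ⟨hbV, hbU⟩, rfl⟩
        -- b ∈ V but b ∉ U means b = 5 or b = 6; a ≠ b
        intro h0
        have hab : a = b := by rwa [sub_eq_zero] at h0
        subst hab
        exact haV hbV
      · intro hz
        by_cases h5 : (z + 5 = 2 ∨ z + 5 = 5 ∨ z + 5 = 6 ∨ z + 5 = 9)
        · -- use a = z + 6, b = 6
          have hz6 : ¬ (z + 6 = 2 ∨ z + 6 = 5 ∨ z + 6 = 6 ∨ z + 6 = 9) := by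
            rcases h5 with h | h | h | h
            · have h6 : z + 6 = 3 := by linear_combination h
              rw [h6]
              push_neg
              exact ⟨h32, fun h => h53 h.symm, fun h => h63 h.symm, fun h => h93 h.symm⟩
            · exact absurd (by linear_combination h) hz
            · have h6 : z + 6 = 7 := by linear_combination h
              rw [h6]
              push_neg
              exact ⟨h72, h75, h76, fun h => h97 h.symm⟩
            · have h6 : z + 6 = 10 := by linear_combination h
              rw [h6]
              push_neg
              exact ⟨h102, h105, h106, h109⟩
          push_neg at hz6
          obtain ⟨e2, e5, e6, e9⟩ := hz6
          exact ⟨z + 6, ⟨⟨e5, e6⟩, by tauto⟩, 6, ⟨by tauto, fun h => h.2 rfl⟩,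
            by ring⟩
        · push_neg at h5
          obtain ⟨e2, e5, e6, e9⟩ := h5
          exact ⟨z + 5, ⟨⟨e5, e6⟩, by tauto⟩, 5, ⟨by tauto, fun h => h.1 rfl⟩,
            by ring⟩
    · exact ⟨⟨fun h => h51 h.symm, fun h => h61 h.symm⟩, by
        simp only [Set.mem_insert_iff, Set.mem_singleton_iff]
        push_neg
        exact ⟨fun h => h21 h.symm, fun h => h51 h.symm, fun h => h61 h.symm, fun h => h91 h.symm⟩⟩
    · exact ⟨⟨h115, h116⟩, by
        simp only [Set.mem_insert_iff, Set.mem_singleton_iff]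
        push_neg
        exact ⟨h112, h115, h116, h119⟩⟩
    · exact ⟨by simp, fun h => h.2 rfl⟩
    · have h : ({x | x ≠ 5 ∧ x ≠ 6} : Set (ZMod p)) ∩ {2,5,6,9} = {2,9} := by
        ext x
        simp only [Set.mem_inter_iff, Set.mem_setOf_eq, Set.mem_insert_iff,
          Set.mem_singleton_iff]
        constructor
        · rintro ⟨⟨hx5, hx6⟩, h | h | h | h⟩ <;> tauto
        · rintro (rfl | rfl)
          · exact ⟨⟨fun h => h52 h.symm, fun h => h62 h.symm⟩, by tauto⟩
          · exact ⟨⟨h95, h96⟩, by tauto⟩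
      rw [h, Set.ncard_pair (fun h => h92 h.symm)]
end

section
/- Let p be a prime with p ≥ 7. Then the sets U' = {0, 1, 2, p − 1} and V' = {0, 1} ∪ {3, 4, …, p − 2} (viewed as subsets of ℤ/pℤ) form a prime-compatible pair modulo p. -/
open Pointwise

private lemma zmod_natCast_inj {p : ℕ} [NeZero p] {a b : ℕ} (ha : a < p) (hb : b < p)
    (h : (a : ZMod p) = b) : a = b := by
  have := congrArg ZMod.val h
  rwa [ZMod.val_natCast_of_lt ha, ZMod.val_natCast_of_lt hb] at this

/-- For `p ≥ 7` prime the sets `U' = {0, 1, 2, p - 1}` and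
`V' = {0, 1} ∪ {3, 4, …, p - 2}` form a prime-compatible pair modulo `p`. -/
theorem explicit_prime_compatible_pair (p : ℕ) (hp : p.Prime) (hp7 : 7 ≤ p) :
    PrimeCompatiblePair p
      ({0, 1, 2, ((p - 1 : ℕ) : ZMod p)} : Set (ZMod p))
      (({0, 1} : Set (ZMod p)) ∪ (fun n : ℕ => (n : ZMod p)) '' Set.Icc 3 (p - 2)) := by
  haveI : NeZero p := ⟨hp.ne_zero⟩
  refine ⟨⟨0, by simp⟩, ⟨0, Or.inl (by simp)⟩, ?_⟩
  ext z
  simp only [Set.mem_sub, Set.mem_compl_iff, Set.mem_singleton_iff]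
  constructor
  · rintro ⟨u, hu, v, hv, rfl⟩
    exact sub_ne_zero.mpr (fun h => hu.2 (h ▸ hv.1))
  · intro hz
    set k := z.val with hkdef
    have hk : ((k : ℕ) : ZMod p) = z := by
      rw [hkdef, ZMod.natCast_val, ZMod.cast_id]
    have hkpos : k ≠ 0 := fun h => hz (by rw [← hk, h, Nat.cast_zero])
    have hklt : k < p := ZMod.val_lt z
    -- membership helpers
    have hmemU : ∀ m : ℕ, 3 ≤ m → m ≤ p - 2 →
        (m : ZMod p) ∉ ({0, 1, 2, ((p - 1 : ℕ) : ZMod p)} : Set (ZMod p)) := by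
      intro m hm3 hm2 h
      have hmlt : m < p := by omega
      rcases h with h | h | h | h
      · have : m = 0 := zmod_natCast_inj hmlt (by omega) (by exact_mod_cast h)
        omega
      · have : m = 1 := zmod_natCast_inj hmlt (by omega) (by exact_mod_cast h)
        omega
      · have : m = 2 := zmod_natCast_inj hmlt (by omega) (by exact_mod_cast h)
        omega
      · have : m = p - 1 := zmod_natCast_inj hmlt (by omega) h
        omega
    have hmemV : ∀ m : ℕ, 3 ≤ m → m ≤ p - 2 →
        (m : ZMod p) ∈ (({0, 1} : Set (ZMod p)) ∪
          (fun n : ℕ => (n : ZMod p)) '' Set.Icc 3 (p - 2)) :=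
      fun m hm3 hm2 => Or.inr ⟨m, ⟨hm3, hm2⟩, rfl⟩
    have hnotV : ∀ a : ℕ, a < p → a ≠ 0 → a ≠ 1 → ¬ (3 ≤ a ∧ a ≤ p - 2) →
        (a : ZMod p) ∉ (({0, 1} : Set (ZMod p)) ∪
          (fun n : ℕ => (n : ZMod p)) '' Set.Icc 3 (p - 2)) := by
      intro a ha ha0 ha1 hamid h
      rcases h with (h | h) | ⟨n, ⟨hn3, hn2⟩, heq⟩
      · exact ha0 (zmod_natCast_inj ha (by omega) (by exact_mod_cast h))
      · exact ha1 (zmod_natCast_inj ha (by omega) (by exact_mod_cast h))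
      · have : n = a := zmod_natCast_inj (by omega) ha heq
        exact hamid (by omega)
    by_cases h4 : 4 ≤ k
    · -- use u = 2, v = p + 2 - k
      set m := p + 2 - k with hmdef
      have hm3 : 3 ≤ m := by omega
      have hm2 : m ≤ p - 2 := by omega
      refine ⟨2, ⟨by simp, ?_⟩, (m : ZMod p), ⟨hmemV m hm3 hm2, hmemU m hm3 hm2⟩, ?_⟩
      · have : ((2 : ℕ) : ZMod p) = (2 : ZMod p) := by norm_cast
        rw [← this]
        exact hnotV 2 (by omega) (by omega) (by omega) (by omega)
      · have e : (m : ZMod p) + z = 2 := by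
          have hmk : m + k = p + 2 := by omega
          rw [← hk, ← Nat.cast_add, hmk]
          push_cast
          simp [ZMod.natCast_self]
        linear_combination -e
    · -- k ∈ {1,2,3}: use u = p - 1, v = p - 1 - k
      set m := p - 1 - k with hmdef
      have hm3 : 3 ≤ m := by omega
      have hm2 : m ≤ p - 2 := by omega
      refine ⟨((p - 1 : ℕ) : ZMod p), ⟨by simp, ?_⟩,
        (m : ZMod p), ⟨hmemV m hm3 hm2, hmemU m hm3 hm2⟩, ?_⟩
      · exact hnotV (p - 1) (by omega) (by omega) (by omega) (by omega)
      · have e : (m : ZMod p) + z = ((p - 1 : ℕ) : ZMod p) := by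
          have hmk : m + k = p - 1 := by omega
          rw [← hk, ← Nat.cast_add, hmk]
        linear_combination -e
end

section
/- Let p be an odd prime, let W ⊆ ℤ/pℤ with |W| = n, and let z ∈ ℤ/pℤ be nonzero. Then the number of functions f : (ℤ/pℤ) \ W → {0, 1} for which there is NO pair of elements u, v ∈ (ℤ/pℤ) \ W with f(u) = 1, f(v) = 0 and u − v = z is at most (3/4)^{(p−1)/2 − n} · 2^{p − n}. -/
/-!
The residues `0, z, 2z, …, (p-1)z` are distinct, so the pairs `{2jz, (2j+1)z}` with
`j < (p-1)/2` are disjoint, and at most `n` of them meet `W`. On each of the remaining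
`m ≥ (p-1)/2 - n` pairs a good colouring must avoid the pattern `f((2j+1)z) = 1, f(2jz) = 0`,
so it takes only `3` of the `4` possible values there. Hence there are at most
`3^m 2^(p-n-2m) = (3/4)^m 2^(p-n)` good colourings.
-/

open Finset Function

theorem card_setOf_forall_imp_mul_four_pow_le {X ι : Type*} [Finite X] [Fintype ι]
    (a b : ι → X) (hab : Injective (Sum.elim a b)) :
    Nat.card {f : X → Bool | ∀ i, f (a i) = true → f (b i) = true} * 4 ^ Nat.card ι ≤
      3 ^ Nat.card ι * 2 ^ Nat.card X := by
  set R := Set.range (Sum.elim a b)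
  let Φ : {f : X → Bool | ∀ i, f (a i) = true → f (b i) = true} →
      (ι → {v : Bool × Bool // v ≠ (true, false)}) × (↥Rᶜ → Bool) := fun f =>
    (fun i => ⟨(f.1 (a i), f.1 (b i)), fun h => by have := f.2 i; simp_all [Prod.ext_iff]⟩,
      fun y => f.1 y)
  have hΦ : Injective Φ := by
    rintro f g hfg
    simp only [Φ, Prod.ext_iff, funext_iff, Subtype.ext_iff] at hfg
    ext x
    by_cases hx : x ∈ R
    · obtain ⟨i | i, rfl⟩ := hx
      exacts [(hfg.1 i).1, (hfg.1 i).2]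
    · exact hfg.2 ⟨x, hx⟩
  have hR : Nat.card R = 2 * Nat.card ι := by
    rw [Nat.card_range_of_injective hab, Nat.card_sum, two_mul]
  have hRX : Nat.card R ≤ Nat.card X := Finite.card_subtype_le _
  have hRc : Nat.card ↥Rᶜ = Nat.card X - 2 * Nat.card ι := by
    rw [Nat.card_coe_set_eq, Set.ncard_compl, ← Nat.card_coe_set_eq, hR]
  have hthree : Nat.card {v : Bool × Bool // v ≠ (true, false)} = 3 := by
    rw [Nat.card_eq_fintype_card]; rfl
  calc _ ≤ 3 ^ Nat.card ι * 2 ^ (Nat.card X - 2 * Nat.card ι) * 4 ^ Nat.card ι := by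
        gcongr
        simpa [Nat.card_prod, Nat.card_pi, Nat.card_fun, hthree, hRc] using
          Nat.card_le_card_of_injective Φ hΦ
    _ = 3 ^ Nat.card ι * 2 ^ Nat.card X := by
        rw [mul_assoc, show (4 : ℕ) = 2 ^ 2 by rfl, ← pow_mul, ← pow_add]
        congr 2
        omega

lemma nsmul_eq_nsmul_iff_of_lt_addOrderOf {G : Type*} [AddMonoid G] {z : G} {k l : ℕ}
    (hk : k < addOrderOf z) (hl : l < addOrderOf z) : k • z = l • z ↔ k = l :=
  nsmul_injOn_Iio_addOrderOf.eq_iff hk hl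

section FreePairs

variable {G : Type*} [AddGroup G] [DecidableEq G] {W : Finset G} {z : G} {q : ℕ}

def nsmulPair (z : G) (j : ℕ) : Finset G := {(2 * j) • z, (2 * j + 1) • z}

def freePairs (W : Finset G) (z : G) (q : ℕ) : Finset ℕ :=
  {j ∈ range q | Disjoint (nsmulPair z j) W}

lemma mem_freePairs {j : ℕ} :
    j ∈ freePairs W z q ↔ j < q ∧ (2 * j) • z ∉ W ∧ (2 * j + 1) • z ∉ W := by
  simp [freePairs, nsmulPair]

def freePairsUpper (W : Finset G) (z : G) (q : ℕ) (j : freePairs W z q) : {x // x ∉ W} :=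
  ⟨(2 * (j : ℕ) + 1) • z, (mem_freePairs.1 j.2).2.2⟩

def freePairsLower (W : Finset G) (z : G) (q : ℕ) (j : freePairs W z q) : {x // x ∉ W} :=
  ⟨(2 * (j : ℕ)) • z, (mem_freePairs.1 j.2).2.1⟩

lemma freePairsUpper_sub_freePairsLower (j : freePairs W z q) :
    (freePairsUpper W z q j : G) - freePairsLower W z q j = z := by
  simp [freePairsUpper, freePairsLower, succ_nsmul']

lemma pairwiseDisjoint_nsmulPair (h : 2 * q ≤ addOrderOf z) :
    ((range q : Finset ℕ) : Set ℕ).PairwiseDisjoint (nsmulPair z) := by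
  intro i hi j hj hij
  simp only [coe_range, Set.mem_Iio] at hi hj
  rw [onFun, disjoint_left]
  simp only [nsmulPair, mem_insert, mem_singleton]
  rintro x (rfl | rfl) (h | h) <;>
    rw [nsmul_eq_nsmul_iff_of_lt_addOrderOf (by omega) (by omega)] at h <;> omega

lemma le_card_add_card_freePairs (h : 2 * q ≤ addOrderOf z) :
    q ≤ #W + #(freePairs W z q) := by
  have key := card_le_card_biUnion_add_card_fiber
    ((pairwiseDisjoint_nsmulPair h).mono fun j => inter_subset_left (s₂ := W))
  rw [card_range] at key
  refine key.trans (add_le_add (card_le_card (biUnion_subset.2 fun _ _ => inter_subset_right)) ?_)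
  simp [freePairs, disjoint_iff_inter_eq_empty]

lemma injective_sum_elim_freePairsUpper_freePairsLower (h : 2 * q ≤ addOrderOf z) :
    Injective (Sum.elim (freePairsUpper W z q) (freePairsLower W z q)) := by
  have hlt (j : freePairs W z q) : 2 * (j : ℕ) + 1 < addOrderOf z := by
    have := (mem_freePairs.1 j.2).1; omega
  rintro (i | i) (j | j) hij <;>
    simp only [Sum.elim_inl, Sum.elim_inr, freePairsUpper, freePairsLower,
      Subtype.mk.injEq] at hij <;>
    rw [nsmul_eq_nsmul_iff_of_lt_addOrderOf (by have := hlt i; omega)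
      (by have := hlt j; omega)] at hij <;>
    first | omega | exact congrArg _ (Subtype.ext (by omega))

end FreePairs

lemma natCast_le_three_quarters_rpow_mul_two_rpow {N m k : ℕ} {x : ℝ}
    (h : N * 4 ^ m ≤ 3 ^ m * 2 ^ k) (hx : x ≤ m) :
    (N : ℝ) ≤ (3 / 4 : ℝ) ^ x * 2 ^ (k : ℝ) := by
  have h' : (N : ℝ) * 4 ^ m ≤ 3 ^ m * 2 ^ k := by exact_mod_cast h
  calc (N : ℝ) ≤ (3 / 4 : ℝ) ^ m * 2 ^ k := by
        rwa [div_pow, div_mul_eq_mul_div, le_div_iff₀ (by positivity)]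
    _ ≤ (3 / 4 : ℝ) ^ x * 2 ^ (k : ℝ) := by
        rw [← Real.rpow_natCast, Real.rpow_natCast 2]
        exact mul_le_mul_of_nonneg_right
          (Real.rpow_le_rpow_of_exponent_ge (by norm_num) (by norm_num) hx) (by positivity)

/-- Let `p` be an odd prime, `W ⊆ ℤ/pℤ` with `|W| = n`, and `z ∈ ℤ/pℤ` nonzero.
The number of two-colourings `f` of the residues outside `W` admitting no pair
`u, v` outside `W` with `f u = 1`, `f v = 0` and `u - v = z` is at most
`(3/4) ^ ((p-1)/2 - n) * 2 ^ (p - n)`. -/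
theorem count_bad_colourings_le
    (p : ℕ) (hp : p.Prime) (hp2 : p ≠ 2)
    (W : Finset (ZMod p)) (n : ℕ) (hn : W.card = n) (z : ZMod p) (hz : z ≠ 0) :
    (Nat.card {f : {x : ZMod p // x ∉ W} → Bool |
        ¬ ∃ u v : {x : ZMod p // x ∉ W},
          f u = true ∧ f v = false ∧ (u : ZMod p) - (v : ZMod p) = z} : ℝ) ≤
      ((3 : ℝ) / 4) ^ (((p : ℝ) - 1) / 2 - (n : ℝ)) *
        (2 : ℝ) ^ ((p : ℝ) - (n : ℝ)) := by
  have : Fact p.Prime := ⟨hp⟩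
  obtain ⟨q, hpq⟩ := hp.odd_of_ne_two hp2
  have hord : 2 * q ≤ addOrderOf z :=
    (addOrderOf_eq_prime (p := p) (by simp) hz).ge.trans' (by omega)
  have hX : Nat.card {x : ZMod p // x ∉ W} = p - n := by
    simp [Nat.card_eq_fintype_card, Fintype.card_subtype_compl, ZMod.card, hn]
  have hnp : n ≤ p := hn ▸ W.card_le_univ.trans_eq (ZMod.card p)
  have hcount := card_setOf_forall_imp_mul_four_pow_le _ _
    (injective_sum_elim_freePairsUpper_freePairsLower (W := W) hord)
  rw [hX] at hcount
  have hfree : (q : ℝ) ≤ n + #(freePairs W z q) := by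
    exact_mod_cast hn ▸ le_card_add_card_freePairs hord
  calc
    _ ≤ (Nat.card {f : {x // x ∉ W} → Bool | ∀ j, f (freePairsUpper W z q j) = true →
          f (freePairsLower W z q j) = true} : ℝ) := by
      refine Nat.cast_le.2 (Nat.card_mono (Set.toFinite _) fun f hf j hj => ?_)
      by_contra hlow
      exact hf ⟨_, _, hj, by simpa using hlow, freePairsUpper_sub_freePairsLower j⟩
    _ ≤ _ := by
      convert natCast_le_three_quarters_rpow_mul_two_rpow hcount ?_ using 3
      · rw [Nat.cast_sub hnp]
      · rw [Nat.card_eq_fintype_card, Fintype.card_coe,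
          show (p : ℝ) = 2 * q + 1 by exact_mod_cast hpq]
        linarith
end

section
/- Let p be an odd prime and let W ⊆ ℤ/pℤ be a nonempty set of residues with (3/4)^{(p−1)/2 − |W|} < 1/p. Then there exist sets U, V ⊆ ℤ/pℤ forming a prime-compatible pair modulo p with W ⊆ U and W ⊆ V. -/
/-!
Colour `ℤ/pℤ` by `c : ℤ/pℤ → Bool` and take `U = W ∪ {c = true}`, `V = W ∪ {c = false}`,
so that `U \ V` and `V \ U` are the two colour classes outside `W`. A nonzero `z` is then a difference as
soon as one of the pairs `((2i+1)z, 2iz)`, `i < p/2`, avoids `W` and is coloured `(true, false)`.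
These pairs are disjoint, at least `(p-1)/2 - |W|` of them avoid `W`, and each one is coloured
otherwise by 3 of the 4 colourings of its two points, so at most `2^p (3/4)^((p-1)/2 - |W|)`
colourings fail for `z`. Summing over the `p - 1` values of `z` gives fewer than `2^p` bad
colourings.
-/

open Pointwise

open Finset Function

section DisjointPairs

variable {α ι : Type*} [Fintype α] [Fintype ι]

theorem card_filter_forall_imp_mul_four_pow_le [DecidableEq α] (a b : ι → α)
    (hab : Injective (Sum.elim a b)) :
    #{c : α → Bool | ∀ i, c (a i) = true → c (b i) = true} * 4 ^ Fintype.card ι ≤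
      3 ^ Fintype.card ι * 2 ^ Fintype.card α := by
  classical
  set P := Set.range (Sum.elim a b)
  let S : Finset (Bool × Bool) := {q | ¬(q.1 = true ∧ q.2 = false)}
  have hS : #S = 3 := by decide
  have hP : Fintype.card P = 2 * Fintype.card ι := by
    rw [Set.card_range_of_injective hab, Fintype.card_sum, two_mul]
  have hPle : 2 * Fintype.card ι ≤ Fintype.card α := hP ▸ Fintype.card_subtype_le _
  let encode (c : α → Bool) : (ι → Bool × Bool) × ({x // x ∉ P} → Bool) :=
    (fun i => (c (a i), c (b i)), fun x => c x)
  have hencode : Injective encode := by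
    intro c₁ c₂ h
    funext x
    by_cases hx : x ∈ P
    · obtain ⟨i | i, rfl⟩ := hx
      · exact congr_arg Prod.fst (congr_fun (congr_arg Prod.fst h) i)
      · exact congr_arg Prod.snd (congr_fun (congr_arg Prod.fst h) i)
    · exact congr_fun (congr_arg Prod.snd h) ⟨x, hx⟩
  have hcard := card_le_card_of_injOn
    (s := {c : α → Bool | ∀ i, c (a i) = true → c (b i) = true})
    (t := Fintype.piFinset (fun _ => S) ×ˢ univ) encode
    (fun c hc => by simpa [encode, S] using (mem_filter.mp hc).2)
    hencode.injOn
  rw [card_product, Fintype.card_piFinset, card_univ, Fintype.card_fun, Fintype.card_bool,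
    Fintype.card_subtype_compl, hP, prod_const, hS, card_univ] at hcard
  calc _ ≤ 3 ^ Fintype.card ι * 2 ^ (Fintype.card α - 2 * Fintype.card ι) *
        4 ^ Fintype.card ι := Nat.mul_le_mul_right _ hcard
    _ = 3 ^ Fintype.card ι * 2 ^ Fintype.card α := by
      rw [mul_assoc, show 4 = 2 ^ 2 by rfl, ← pow_mul, ← pow_add, Nat.sub_add_cancel hPle]

theorem card_le_card_subtype_notMem_add_ncard (a b : ι → α) (hab : Injective (Sum.elim a b))
    (W : Set α) : Fintype.card ι ≤ Nat.card {i // a i ∉ W ∧ b i ∉ W} + W.ncard := by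
  classical
  let hit (i : {i // ¬(a i ∉ W ∧ b i ∉ W)}) : W :=
    if ha : a i ∈ W then ⟨a i, ha⟩ else ⟨b i, by have := i.2; tauto⟩
  have hhit : Injective hit := by
    intro i j h
    apply Subtype.ext
    unfold hit at h
    split_ifs at h
    · simpa using hab (a₁ := .inl i) (a₂ := .inl j) (congr_arg Subtype.val h)
    · simpa using hab (a₁ := .inl i) (a₂ := .inr j) (congr_arg Subtype.val h)
    · simpa using hab (a₁ := .inr i) (a₂ := .inl j) (congr_arg Subtype.val h)
    · simpa using hab (a₁ := .inr i) (a₂ := .inr j) (congr_arg Subtype.val h)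
  have := Fintype.card_subtype_compl (fun i => a i ∉ W ∧ b i ∉ W)
  have := Nat.card_le_card_of_injective hit hhit
  rw [Nat.card_coe_set_eq, Nat.card_eq_fintype_card] at this
  have := Fintype.card_subtype_le (fun i => a i ∉ W ∧ b i ∉ W)
  rw [Nat.card_eq_fintype_card]
  omega

end DisjointPairs

theorem exists_forall_of_sum_card_filter_not_lt {β ι : Type*} [Fintype β] (s : Finset ι)
    (P : ι → β → Prop) [∀ i, DecidablePred (P i)]
    (h : ∑ i ∈ s, #{x | ¬P i x} < Fintype.card β) : ∃ x, ∀ i ∈ s, P i x := by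
  classical
  by_contra! hbad
  have hcover : (univ : Finset β) ⊆ s.biUnion fun i => {x | ¬P i x} := fun x _ => by
    obtain ⟨i, hi, hx⟩ := hbad x
    exact mem_biUnion.2 ⟨i, hi, mem_filter.2 ⟨mem_univ x, hx⟩⟩
  have := (card_le_card hcover).trans card_biUnion_le
  rw [card_univ] at this
  omega

section ZModColorings

variable {p : ℕ}

def RealizesDifference (W : Set (ZMod p)) (c : ZMod p → Bool) (z : ZMod p) : Prop :=
  ∃ u, u ∉ W ∧ u - z ∉ W ∧ c u = true ∧ c (u - z) = false

theorem primeCompatiblePair_of_forall_realizesDifference [Nontrivial (ZMod p)]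
    {W : Set (ZMod p)} {c : ZMod p → Bool} (hc : ∀ z ≠ 0, RealizesDifference W c z) :
    PrimeCompatiblePair p (W ∪ {x | c x = true}) (W ∪ {x | c x = false}) := by
  have hUV :
      (W ∪ {x | c x = true}) \ (W ∪ {x | c x = false}) = {x | x ∉ W ∧ c x = true} := by
    ext x
    by_cases hx : x ∈ W <;> simp [hx]
  have hVU :
      (W ∪ {x | c x = false}) \ (W ∪ {x | c x = true}) = {x | x ∉ W ∧ c x = false} := by
    ext x
    by_cases hx : x ∈ W <;> simp [hx]
  obtain ⟨u, -, -, hu, hu'⟩ := hc 1 one_ne_zero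
  refine ⟨⟨u, Or.inr hu⟩, ⟨u - 1, Or.inr hu'⟩, ?_⟩
  rw [hUV, hVU]
  ext z
  simp only [Set.mem_sub, Set.mem_compl_iff, Set.mem_singleton_iff, Set.mem_ofPred_eq]
  constructor
  · rintro ⟨u, ⟨-, hu⟩, v, ⟨-, hv⟩, rfl⟩ huv
    rw [sub_eq_zero.1 huv, hv] at hu
    exact Bool.false_ne_true hu
  · intro hz
    obtain ⟨u, hu, hu', hcu, hcu'⟩ := hc z hz
    exact ⟨u, ⟨hu, hcu⟩, u - z, ⟨hu', hcu'⟩, sub_sub_cancel u z⟩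

variable [Fact p.Prime]

theorem injective_sum_elim_natCast_mul {z : ZMod p} (hz : z ≠ 0) :
    Injective (Sum.elim (fun i : Fin (p / 2) => ((2 * i + 1 : ℕ) : ZMod p) * z)
      (fun i : Fin (p / 2) => ((2 * i : ℕ) : ZMod p) * z)) := by
  have hcancel (k l : ℕ) (hk : k < p) (hl : l < p) (h : (k : ZMod p) * z = l * z) : k = l := by
    have := mul_right_cancel₀ hz h
    rwa [ZMod.natCast_eq_natCast_iff', Nat.mod_eq_of_lt hk, Nat.mod_eq_of_lt hl] at this
  have := Nat.div_mul_le_self p 2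
  rintro (i | i) (j | j) h <;> have hi := i.isLt <;> have hj := j.isLt <;>
    have := hcancel _ _ (by omega) (by omega) h
  all_goals first | exact absurd this (by omega) | exact congrArg _ (Fin.ext (by omega))

open Classical in
theorem card_filter_not_realizesDifference_le (W : Set (ZMod p)) {z : ZMod p} (hz : z ≠ 0) :
    (#{c : ZMod p → Bool | ¬RealizesDifference W c z} : ℝ) ≤
      2 ^ p * (3 / 4) ^ (((p : ℝ) - 1) / 2 - W.ncard) := by
  set a := fun i : Fin (p / 2) => ((2 * i + 1 : ℕ) : ZMod p) * z
  set b := fun i : Fin (p / 2) => ((2 * i : ℕ) : ZMod p) * z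
  have hab : Injective (Sum.elim a b) := injective_sum_elim_natCast_mul hz
  have hba (i) : a i - z = b i := by simp only [a, b]; push_cast; ring
  let G := {i // a i ∉ W ∧ b i ∉ W}
  have hG : Injective (Sum.elim (a ∘ Subtype.val) (b ∘ Subtype.val) : G ⊕ G → ZMod p) := by
    rw [← Sum.elim_comp_map]
    exact hab.comp (Sum.map_injective.2 ⟨Subtype.val_injective, Subtype.val_injective⟩)
  have hcount := card_filter_forall_imp_mul_four_pow_le _ _ hG
  rw [ZMod.card] at hcount
  have hsub : ({c | ¬RealizesDifference W c z} : Finset (ZMod p → Bool)) ⊆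
      ({c : ZMod p → Bool | ∀ i : G, c (a i) = true → c (b i) = true} : Finset _) := by
    intro c
    simp only [mem_filter, mem_univ, true_and]
    intro hc i hci
    by_contra hcbi
    exact hc ⟨a i, i.2.1, hba i ▸ i.2.2, hci, hba i ▸ by simpa using hcbi⟩
  have hg : ((p : ℝ) - 1) / 2 - W.ncard ≤ Fintype.card G := by
    have hpairs := card_le_card_subtype_notMem_add_ncard a b hab W
    rw [Nat.card_eq_fintype_card, Fintype.card_fin] at hpairs
    have hhalf : (p : ℝ) ≤ 2 * (p / 2 : ℕ) + 1 := by
      exact_mod_cast (by omega : p ≤ 2 * (p / 2) + 1)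
    have : ((p / 2 : ℕ) : ℝ) ≤ Fintype.card G + W.ncard := by exact_mod_cast hpairs
    linarith
  calc (#{c : ZMod p → Bool | ¬RealizesDifference W c z} : ℝ)
      ≤ #{c : ZMod p → Bool | ∀ i : G, c (a i) = true → c (b i) = true} := by
        exact_mod_cast card_le_card hsub
    _ ≤ 3 ^ Fintype.card G * 2 ^ p / 4 ^ Fintype.card G := by
        rw [le_div_iff₀ (by positivity)]
        exact_mod_cast hcount
    _ = 2 ^ p * (3 / 4) ^ (Fintype.card G : ℝ) := by
        rw [Real.rpow_natCast, div_pow]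
        ring
    _ ≤ 2 ^ p * (3 / 4) ^ (((p : ℝ) - 1) / 2 - W.ncard) := by
        gcongr 2 ^ p * ?_
        exact Real.rpow_le_rpow_of_exponent_ge (by norm_num) (by norm_num) hg

end ZModColorings

theorem exists_prime_compatible_pair_of_bound_general
    (p : ℕ) (hp : p.Prime) (W : Set (ZMod p))
    (h : ((3 : ℝ) / 4) ^ (((p : ℝ) - 1) / 2 - (W.ncard : ℝ)) < 1 / (p : ℝ)) :
    ∃ U V : Set (ZMod p), PrimeCompatiblePair p U V ∧ W ⊆ U ∧ W ⊆ V := by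
  have := Fact.mk hp
  classical
  set q : ℝ := (3 / 4) ^ (((p : ℝ) - 1) / 2 - W.ncard)
  have hp1 : (1 : ℝ) < p := by exact_mod_cast hp.one_lt
  have hsum : ∑ z ∈ univ.erase (0 : ZMod p), (#{c | ¬RealizesDifference W c z} : ℝ)
      ≤ (p - 1) * (2 ^ p * q) := by
    refine (sum_le_sum fun z hz =>
      card_filter_not_realizesDifference_le W (ne_of_mem_erase hz)).trans_eq ?_
    rw [sum_const, card_erase_of_mem (mem_univ _), card_univ, ZMod.card, nsmul_eq_mul,
      Nat.cast_sub hp.one_le, Nat.cast_one]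
  have hlt : (p - 1) * (2 ^ p * q) < 2 ^ p :=
    calc (p - 1) * (2 ^ p * q) < (p - 1) * (2 ^ p * (1 / p)) := by gcongr
      _ ≤ 2 ^ p := by
        rw [mul_one_div, ← mul_div_assoc, div_le_iff₀ (by linarith)]
        nlinarith [pow_pos (two_pos : (0 : ℝ) < 2) p]
  obtain ⟨c, hc⟩ := exists_forall_of_sum_card_filter_not_lt (univ.erase 0)
    (fun z c => RealizesDifference W c z) (by
      rw [Fintype.card_fun, ZMod.card, Fintype.card_bool]
      exact_mod_cast (hsum.trans_lt hlt))
  exact ⟨_, _, primeCompatiblePair_of_forall_realizesDifference fun z hz =>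
    hc z (mem_erase.2 ⟨hz, mem_univ z⟩), Set.subset_union_left, Set.subset_union_left⟩

/-- If `p` is an odd prime and `W ⊆ ℤ/pℤ` is nonempty with
`(3/4) ^ ((p-1)/2 - |W|) < 1/p`, then there is a prime-compatible pair `U, V`
modulo `p` with `W ⊆ U` and `W ⊆ V`. -/
theorem exists_prime_compatible_pair_of_bound
    (p : ℕ) (hp : p.Prime) (hp2 : p ≠ 2) (W : Set (ZMod p)) (hW : W.Nonempty)
    (h : ((3 : ℝ) / 4) ^ (((p : ℝ) - 1) / 2 - (W.ncard : ℝ)) < 1 / (p : ℝ)) :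
    ∃ U V : Set (ZMod p), PrimeCompatiblePair p U V ∧ W ⊆ U ∧ W ⊆ V :=
  exists_prime_compatible_pair_of_bound_general p hp W h
end
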